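/- Let δ : A → A ⊗ C*(G) be a coaction of a discrete groupoid G on a C*-algebra A. Then A is a topologically G-graded C*-algebra with grading given by the spectral subspaces A_g^δ = {a ∈ A : δ(a) = a ⊗ U_g}; the conditional expectation is E_A = δ⁻¹ ∘ (id ⊗ E_{C*(G)}) ∘ δ, where E_{C*(G)} is the canonical conditional expectation of C*(G) onto the closed span of {U_{1_x}}. -/

import Mathlib

open CategoryTheory
open scoped Classical

universe v u u₁ u₂

def Mor (V : Type v) [Groupoid V] := Σ (x : V) (y : V), x ⟶ y

namespace Mor

variable {V : Type v} [Groupoid V]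

def src (f : Mor V) : V := f.1
def tgt (f : Mor V) : V := f.2.1
def hom (f : Mor V) : f.src ⟶ f.tgt := f.2.2

def comp (g f : Mor V) (h : f.tgt = g.src) : Mor V :=
  ⟨f.src, g.tgt, f.hom ≫ eqToHom h ≫ g.hom⟩

def inv (f : Mor V) : Mor V := ⟨f.tgt, f.src, Groupoid.inv f.hom⟩
def id (x : V) : Mor V := ⟨x, x, 𝟙 x⟩

/-- `f` is an identity morphism. -/
def IsId (f : Mor V) : Prop := ∃ x : V, f = Mor.id x

end Mor

variable {V : Type v} [Groupoid V]
  {A : Type u} [NonUnitalCStarAlgebra A]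
  {Cg : Type u₁} [NonUnitalCStarAlgebra Cg]
  {T : Type u₂} [NonUnitalCStarAlgebra T]

/-- The spectral subspace `A_g^δ = {a ∈ A : δ(a) = a ⊗ U_g}` of a coaction. -/
def spec (δ : A →⋆ₙₐ[ℂ] T) (tmul : A →ₗ[ℂ] Cg →ₗ[ℂ] T) (U : Mor V → Cg)
    (g : Mor V) : Submodule ℂ A where
  carrier := {a | δ a = tmul a (U g)}
  add_mem' := by
    intro a b ha hb
    simp only [Set.mem_setOf_eq] at *
    rw [map_add, ha, hb, map_add, LinearMap.add_apply]
  zero_mem' := by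
    simp only [Set.mem_setOf_eq, map_zero, LinearMap.zero_apply]
  smul_mem' := by
    intro c a ha
    simp only [Set.mem_setOf_eq] at *
    rw [map_smul, ha, map_smul, LinearMap.smul_apply]

/-!
Applying `id ⊗ E_{C*(G)}` to `δ(a) = a ⊗ U_g` gives `a ⊗ U_g` or `0` according as `g` is a unit or
not. Hence `(id ⊗ E) ∘ δ` maps the dense span of the spectral subspaces into the closed range of
the isometry `δ`, and `E_A = δ⁻¹ ∘ (id ⊗ E) ∘ δ` is a bounded map fixing the unit fibres and
killing the others. Since `a_f^* a_g` lies in the fibre of `f⁻¹ g`, which is a unit only when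
`f = g`, on a finite sum `a = ∑ a_f` we get `E_A(a^* a) = ∑ a_f^* a_f ≥ ∑_{f unit} a_f^* a_f =
E_A(a)^* E_A(a)`. By density this Kadison–Schwarz inequality holds everywhere, and it makes `E_A`
positive and contractive. Finally, if `∑ a_g = 0` then applying `E_A` to `a_f^* ∑ a_g` gives
`a_f^* a_f = 0`, so the fibres are independent.
-/

namespace Mor

theorem inv_comp_self (f : Mor V) : f.inv.comp f rfl = Mor.id f.src := by
  obtain ⟨a, b, φ⟩ := f
  show (⟨a, a, φ ≫ eqToHom rfl ≫ Groupoid.inv φ⟩ : Mor V) = ⟨a, a, 𝟙 a⟩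
  rw [eqToHom_refl, Category.id_comp, Groupoid.comp_inv]

theorem inv_comp_isId_iff {f g : Mor V} (h : g.tgt = f.inv.src) :
    (f.inv.comp g h).IsId ↔ g = f := by
  refine ⟨fun ⟨x, hx⟩ => ?_, by rintro rfl; exact ⟨_, inv_comp_self g⟩⟩
  obtain ⟨fa, fb, φ⟩ := f
  obtain ⟨ga, gb, ψ⟩ := g
  dsimp [Mor.tgt, Mor.src, Mor.inv] at h
  subst h
  dsimp [Mor.comp, Mor.inv, Mor.id, Mor.src, Mor.tgt, Mor.hom] at hx
  obtain ⟨rfl, hx⟩ := Sigma.mk.inj_iff.mp hx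
  obtain ⟨rfl, hx⟩ := Sigma.mk.inj_iff.mp (eq_of_heq hx)
  have hψ : ψ = φ := by
    simpa [Category.assoc, Groupoid.inv_comp] using congrArg (· ≫ φ) (eq_of_heq hx)
  rw [hψ]

end Mor

theorem mem_spec {δ : A →⋆ₙₐ[ℂ] T} {tmul : A →ₗ[ℂ] Cg →ₗ[ℂ] T} {U : Mor V → Cg}
    {g : Mor V} {a : A} : a ∈ spec δ tmul U g ↔ δ a = tmul a (U g) := Iff.rfl

structure IsGroupoidGrading {R A : Type*} [Semiring R] [NonUnitalRing A] [StarRing A]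
    [Module R A] (S : Mor V → Submodule R A) : Prop where
  mul_mem : ∀ (f g : Mor V) (h : g.tgt = f.src) (a b : A), a ∈ S f → b ∈ S g →
    a * b ∈ S (f.comp g h)
  mul_eq_zero : ∀ f g : Mor V, g.tgt ≠ f.src → ∀ a b : A, a ∈ S f → b ∈ S g → a * b = 0
  star_mem : ∀ (g : Mor V) (a : A), a ∈ S g → star a ∈ S g.inv

structure IsGradingExpectation {R A F : Type*} [Semiring R] [AddCommMonoid A] [Module R A]
    [FunLike F A A] (S : Mor V → Submodule R A) (E : F) : Prop where
  map_eq_self : ∀ x : V, ∀ a ∈ S (Mor.id x), E a = a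
  map_eq_zero : ∀ g : Mor V, ¬ g.IsId → ∀ a ∈ S g, E a = 0

theorem map_star_sum_mul_sum {ι A F : Type*} [NonUnitalNonAssocSemiring A] [StarRing A]
    [FunLike F A A] [AddMonoidHomClass F A A] (φ : F) (s : Finset ι) (b : ι → A)
    (h : ∀ i ∈ s, ∀ j ∈ s, i ≠ j → φ (star (b i) * b j) = 0) :
    φ (star (∑ i ∈ s, b i) * ∑ i ∈ s, b i) = ∑ i ∈ s, φ (star (b i) * b i) := by
  rw [star_sum, Finset.sum_mul_sum, map_sum]
  refine Finset.sum_congr rfl fun i hi => ?_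
  rw [map_sum, Finset.sum_eq_single i (fun j hj hji => h i hi j hj hji.symm) (absurd hi)]

namespace IsGroupoidGrading

section Algebraic

variable {R A F : Type*} [Semiring R] [NonUnitalRing A] [StarRing A] [Module R A]
  {S : Mor V → Submodule R A} [FunLike F A A] {E : F}

theorem map_star_mul_of_mem (hS : IsGroupoidGrading S) (hE : IsGradingExpectation S E)
    {f : Mor V} {a b : A} (ha : a ∈ S f) (hb : b ∈ S f) : E (star a * b) = star a * b :=
  hE.map_eq_self f.src _
    (Mor.inv_comp_self f ▸ hS.mul_mem f.inv f rfl _ _ (hS.star_mem f a ha) hb)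

theorem map_star_mul_of_ne [AddMonoidHomClass F A A] (hS : IsGroupoidGrading S)
    (hE : IsGradingExpectation S E)
    {f g : Mor V} {a b : A} (ha : a ∈ S f) (hb : b ∈ S g) (hne : g ≠ f) : E (star a * b) = 0 := by
  by_cases h : g.tgt = f.inv.src
  · exact hE.map_eq_zero _ (by rwa [Mor.inv_comp_isId_iff]) _
      (hS.mul_mem f.inv g h _ _ (hS.star_mem f a ha) hb)
  · rw [hS.mul_eq_zero f.inv g h _ _ (hS.star_mem f a ha) hb, map_zero]

theorem star_mul_eq_zero_of_ne (hS : IsGroupoidGrading S) (hE : IsGradingExpectation S E)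
    {f g : Mor V} {a b : A} (ha : a ∈ S f) (hb : b ∈ S g) (hne : f ≠ g) :
    star (E a) * E b = 0 := by
  by_cases hf : f.IsId
  · by_cases hg : g.IsId
    · obtain ⟨x, rfl⟩ := hf
      obtain ⟨y, rfl⟩ := hg
      rw [hE.map_eq_self x a ha, hE.map_eq_self y b hb]
      exact hS.mul_eq_zero (Mor.id x).inv (Mor.id y) (fun hyx : y = x => hne (hyx ▸ rfl)) _ _
        (hS.star_mem _ a ha) hb
    · rw [hE.map_eq_zero g hg b hb, mul_zero]
  · rw [hE.map_eq_zero f hf a ha, star_zero, zero_mul]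

theorem star_map_mul_map_le [AddMonoidHomClass F A A] [PartialOrder A] [StarOrderedRing A]
    (hS : IsGroupoidGrading S) (hE : IsGradingExpectation S E) {a : A}
    (ha : a ∈ Submodule.span R (⋃ g, (S g : Set A))) :
    star (E a) * E a ≤ E (star a * a) := by
  rw [Submodule.span_iUnion] at ha
  simp only [Submodule.span_eq] at ha
  obtain ⟨l, hl, rfl⟩ := (Submodule.mem_iSup_iff_exists_finsupp S _).mp ha
  simp only [Finsupp.sum, map_sum]
  have hterm : ∀ f, star (E (l f)) * E (l f) ≤ star (l f) * l f := by
    intro f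
    by_cases hf : f.IsId
    · obtain ⟨x, rfl⟩ := hf
      rw [hE.map_eq_self x _ (hl _)]
    · rw [hE.map_eq_zero f hf _ (hl f), star_zero, zero_mul]
      exact star_mul_self_nonneg _
  calc star (∑ f ∈ l.support, E (l f)) * ∑ f ∈ l.support, E (l f)
      = ∑ f ∈ l.support, star (E (l f)) * E (l f) :=
        map_star_sum_mul_sum (AddMonoidHom.id A) _ _
          fun f _ g _ hfg => hS.star_mul_eq_zero_of_ne hE (hl f) (hl g) hfg
    _ ≤ ∑ f ∈ l.support, star (l f) * l f := Finset.sum_le_sum fun f _ => hterm f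
    _ = E (star (∑ f ∈ l.support, l f) * ∑ f ∈ l.support, l f) := by
        rw [map_star_sum_mul_sum E _ _
          fun f _ g _ hfg => hS.map_star_mul_of_ne hE (hl f) (hl g) (Ne.symm hfg)]
        exact Finset.sum_congr rfl fun f _ => (hS.map_star_mul_of_mem hE (hl f) (hl f)).symm

end Algebraic

theorem eq_zero_of_sum_eq_zero {R A F : Type*} [Semiring R] [NonUnitalNormedRing A] [StarRing A]
    [CStarRing A] [Module R A] {S : Mor V → Submodule R A} [FunLike F A A]
    [AddMonoidHomClass F A A] {E : F} (hS : IsGroupoidGrading S) (hE : IsGradingExpectation S E)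
    (s : Finset (Mor V)) (b : Mor V → A) (hb : ∀ f, b f ∈ S f) (hsum : ∑ f ∈ s, b f = 0) :
    ∀ f ∈ s, b f = 0 := by
  intro f hf
  have hE_sum : E (star (b f) * ∑ g ∈ s, b g) = star (b f) * b f := by
    rw [Finset.mul_sum, map_sum, Finset.sum_eq_single f
      (fun g _ hgf => hS.map_star_mul_of_ne hE (hb f) (hb g) hgf) (absurd hf),
      hS.map_star_mul_of_mem hE (hb f) (hb f)]
  rw [hsum, mul_zero, map_zero] at hE_sum
  exact CStarRing.star_mul_self_eq_zero_iff _ |>.mp hE_sum.symm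

end IsGroupoidGrading

def IsSchwarzMap {A : Type*} [Mul A] [Star A] [LE A] (E : A → A) : Prop :=
  ∀ a, star (E a) * E a ≤ E (star a * a)

theorem le_of_forall_pow_two_pow_le_mul {x y K : ℝ} (hy : 0 ≤ y)
    (h : ∀ n : ℕ, x ^ 2 ^ n ≤ K * y ^ 2 ^ n) : x ≤ y := by
  rcases hy.eq_or_lt with rfl | hy
  · simpa using h 0
  by_contra! hyx
  have hr : 1 < x / y := (one_lt_div hy).mpr hyx
  obtain ⟨n, hn⟩ := pow_unbounded_of_one_lt K hr
  have hle : (x / y) ^ 2 ^ n ≤ K := by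
    rw [div_pow, div_le_iff₀ (by positivity)]
    exact h n
  have hmono : (x / y) ^ n ≤ (x / y) ^ 2 ^ n :=
    pow_le_pow_right₀ hr.le Nat.lt_two_pow_self.le
  linarith

namespace IsSchwarzMap

variable {A : Type*} [NonUnitalCStarAlgebra A] [PartialOrder A] [StarOrderedRing A]

theorem map_nonneg {E : A → A} (hE : IsSchwarzMap E) {a : A} (ha : 0 ≤ a) : 0 ≤ E a := by
  obtain ⟨b, rfl⟩ := CStarAlgebra.nonneg_iff_eq_star_mul_self.mp ha
  exact (star_mul_self_nonneg _).trans (hE b)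

theorem norm_sq_le {E : A → A} (hE : IsSchwarzMap E) (a : A) :
    ‖E a‖ ^ 2 ≤ ‖E (star a * a)‖ := by
  rw [sq, ← CStarRing.norm_star_mul_self]
  exact CStarAlgebra.norm_le_norm_of_nonneg_of_le (star_mul_self_nonneg _) (hE a)

variable {E : A →L[ℂ] A}

theorem norm_pow_two_pow_le (hE : IsSchwarzMap E) {c : A} (hc : IsSelfAdjoint c) (n : ℕ) :
    ‖E c‖ ^ 2 ^ n ≤ ‖E‖ * ‖c‖ ^ 2 ^ n := by
  induction n generalizing c with
  | zero => simpa using E.le_opNorm c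
  | succ n ih =>
    have hcc : IsSelfAdjoint (c * c) := by
      simpa [hc.star_eq] using IsSelfAdjoint.star_mul_self c
    calc ‖E c‖ ^ 2 ^ (n + 1) = (‖E c‖ ^ 2) ^ 2 ^ n := by rw [← pow_mul, pow_succ']
      _ ≤ ‖E (c * c)‖ ^ 2 ^ n := by
          gcongr
          simpa [hc.star_eq] using hE.norm_sq_le c
      _ ≤ ‖E‖ * ‖c * c‖ ^ 2 ^ n := ih hcc
      _ = ‖E‖ * ‖c‖ ^ 2 ^ (n + 1) := by rw [hc.norm_mul_self, ← pow_mul, pow_succ']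

theorem norm_map_le (hE : IsSchwarzMap E) (a : A) : ‖E a‖ ≤ ‖a‖ := by
  have hsa : ‖E (star a * a)‖ ≤ ‖star a * a‖ := le_of_forall_pow_two_pow_le_mul (norm_nonneg _)
    (hE.norm_pow_two_pow_le (IsSelfAdjoint.star_mul_self a))
  have hsq : ‖E a‖ ^ 2 ≤ ‖a‖ ^ 2 := calc
    ‖E a‖ ^ 2 ≤ ‖E (star a * a)‖ := hE.norm_sq_le a
    _ ≤ ‖star a * a‖ := hsa
    _ = ‖a‖ ^ 2 := by rw [CStarRing.norm_star_mul_self, sq]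
  exact (pow_le_pow_iff_left₀ (norm_nonneg _) (norm_nonneg _) two_ne_zero).mp hsq

theorem opNorm_le_one (hE : IsSchwarzMap E) : ‖E‖ ≤ 1 :=
  E.opNorm_le_bound zero_le_one fun a => by simpa using hE.norm_map_le a

end IsSchwarzMap

theorem NonUnitalStarAlgHom.exists_comp_eq_of_dense_span {A B : Type*}
    [NonUnitalCStarAlgebra A] [NonUnitalCStarAlgebra B] (δ : A →⋆ₙₐ[ℂ] B)
    (hinj : Function.Injective δ) (P : B →L[ℂ] B) {D : Set A}
    (hD : Dense (Submodule.span ℂ D : Set A)) (hPD : ∀ a ∈ D, P (δ a) ∈ Set.range δ) :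
    ∃ E : A →L[ℂ] A, ∀ a, δ (E a) = P (δ a) := by
  let δl : A →ₗ[ℂ] B := δ
  let K : Submodule ℂ A := (LinearMap.range δl).comap (P.toLinearMap ∘ₗ δl)
  have hK : IsClosed (K : Set A) :=
    (isometry δ hinj).isClosedEmbedding.isClosed_range.preimage
      (P.continuous.comp (isometry δ hinj).continuous)
  have hDK : D ⊆ K := fun a ha => Submodule.mem_comap.mpr (hPD a ha)
  have hmem : ∀ a, a ∈ K := hD.induction (fun a ha => Submodule.span_le.mpr hDK ha) hK
  let Pδ : A →ₗ[ℂ] LinearMap.range δl :=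
    (P.toLinearMap ∘ₗ δl).codRestrict _ fun a => Submodule.mem_comap.mp (hmem a)
  let E₀ : A →ₗ[ℂ] A := (LinearEquiv.ofInjective δl hinj).symm ∘ₗ Pδ
  have hE₀ : ∀ a, δ (E₀ a) = P (δ a) := fun a =>
    congrArg Subtype.val ((LinearEquiv.ofInjective δl hinj).apply_symm_apply (Pδ a))
  refine ⟨E₀.mkContinuous ‖P‖ fun a => ?_, hE₀⟩
  rw [← norm_map δ hinj (E₀ a), hE₀, ← norm_map δ hinj a]
  exact P.le_opNorm _

section Coaction

variable {U : Mor V → Cg} {tmul : A →ₗ[ℂ] Cg →ₗ[ℂ] T} {δ : A →⋆ₙₐ[ℂ] T}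

theorem isClosed_spec (hTnorm : ∀ (a : A) (u : Cg), ‖tmul a u‖ ≤ ‖a‖ * ‖u‖) (g : Mor V) :
    IsClosed (spec δ tmul U g : Set A) :=
  isClosed_eq (AddMonoidHomClass.continuous_of_bound δ 1 fun a => by
      simpa using NonUnitalStarAlgHom.norm_apply_le δ a)
    (AddMonoidHomClass.continuous_of_bound (tmul.flip (U g)) ‖U g‖ fun a => by
      simpa [mul_comm] using hTnorm a (U g))

theorem isGroupoidGrading_spec
    (hUmul : ∀ (f g : Mor V) (h : g.tgt = f.src), U f * U g = U (f.comp g h))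
    (hUzero : ∀ f g : Mor V, g.tgt ≠ f.src → U f * U g = 0)
    (hUstar : ∀ f : Mor V, star (U f) = U f.inv)
    (hTmul : ∀ (a b : A) (u w : Cg), tmul a u * tmul b w = tmul (a * b) (u * w))
    (hTstar : ∀ (a : A) (u : Cg), star (tmul a u) = tmul (star a) (star u))
    (hinj : Function.Injective δ) : IsGroupoidGrading (spec δ tmul U) where
  mul_mem f g h a b ha hb := by
    rw [mem_spec] at *
    rw [map_mul, ha, hb, hTmul, hUmul f g h]
  mul_eq_zero f g h a b ha hb := hinj <| by
    rw [mem_spec] at ha hb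
    rw [map_mul, ha, hb, hTmul, hUzero f g h, map_zero, map_zero]
  star_mem g a ha := by
    rw [mem_spec] at *
    rw [map_star, ha, hTstar, hUstar]

theorem map_apply_eq_ite_of_mem_spec {EG : Cg →L[ℂ] Cg}
    (hEGid : ∀ x : V, EG (U (Mor.id x)) = U (Mor.id x))
    (hEG0 : ∀ g : Mor V, ¬ g.IsId → EG (U g) = 0) {idEG : T →L[ℂ] T}
    (hidEG : ∀ (a : A) (u : Cg), idEG (tmul a u) = tmul a (EG u)) {g : Mor V} {a : A}
    (ha : a ∈ spec δ tmul U g) : idEG (δ a) = δ (if g.IsId then a else 0) := by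
  rw [mem_spec.mp ha, hidEG]
  split_ifs with hg
  · obtain ⟨x, rfl⟩ := hg
    rw [hEGid, ha]
  · rw [hEG0 g hg, map_zero, map_zero]

end Coaction

/-- a coaction `δ : A → A ⊗ C*(G)` of a discrete groupoid `G` on
a C*-algebra `A` (an injective *-homomorphism whose spectral subspaces
`A_g^δ = {a : δ(a) = a ⊗ U_g}` have dense span) makes `A` a topologically
`G`-graded C*-algebra, graded by the spectral subspaces, with conditional
expectation `E_A = δ⁻¹ ∘ (id ⊗ E_{C*(G)}) ∘ δ`. -/
theorem statement17 [PartialOrder A] [StarOrderedRing A]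
    -- the full groupoid C*-algebra with its generators
    (U : Mor V → Cg)
    (hUmul : ∀ (f g : Mor V) (h : g.tgt = f.src), U f * U g = U (f.comp g h))
    (hUzero : ∀ f g : Mor V, g.tgt ≠ f.src → U f * U g = 0)
    (hUstar : ∀ f : Mor V, star (U f) = U f.inv)
    -- the canonical conditional expectation of `C*(G)` and `id ⊗ E_{C*(G)}`
    (EG : Cg →L[ℂ] Cg)
    (hEGid : ∀ x : V, EG (U (Mor.id x)) = U (Mor.id x))
    (hEG0 : ∀ g : Mor V, ¬ g.IsId → EG (U g) = 0)
    -- the spatial tensor product `T = A ⊗ C*(G)`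
    (tmul : A →ₗ[ℂ] Cg →ₗ[ℂ] T)
    (hTmul : ∀ (a b : A) (u w : Cg), tmul a u * tmul b w = tmul (a * b) (u * w))
    (hTstar : ∀ (a : A) (u : Cg), star (tmul a u) = tmul (star a) (star u))
    (hTnorm : ∀ (a : A) (u : Cg), ‖tmul a u‖ = ‖a‖ * ‖u‖)
    (idEG : T →L[ℂ] T)
    (hidEG : ∀ (a : A) (u : Cg), idEG (tmul a u) = tmul a (EG u))
    -- the coaction
    (δ : A →⋆ₙₐ[ℂ] T)
    (hinj : Function.Injective δ)
    (hδdense : Dense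
      (↑(Submodule.span ℂ (⋃ g : Mor V, (spec δ tmul U g : Set A))) : Set A)) :
    -- `{A_g^δ}` is a topological `G`-grading of `A`:
    (∀ g : Mor V, IsClosed (spec δ tmul U g : Set A)) ∧
    (∀ (f g : Mor V) (h : g.tgt = f.src) (a b : A), a ∈ spec δ tmul U f →
      b ∈ spec δ tmul U g → a * b ∈ spec δ tmul U (f.comp g h)) ∧
    (∀ f g : Mor V, g.tgt ≠ f.src → ∀ a b : A, a ∈ spec δ tmul U f →
      b ∈ spec δ tmul U g → a * b = 0) ∧
    (∀ (g : Mor V) (a : A), a ∈ spec δ tmul U g → star a ∈ spec δ tmul U g.inv) ∧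
    (∀ (s : Finset (Mor V)) (b : Mor V → A), (∀ f, b f ∈ spec δ tmul U f) →
      (∑ f ∈ s, b f) = 0 → ∀ f ∈ s, b f = 0) ∧
    -- and `E_A = δ⁻¹ ∘ (id ⊗ E_{C*(G)}) ∘ δ` is a conditional expectation:
    ∃ EA : A →L[ℂ] A,
      (∀ a : A, δ (EA a) = idEG (δ a)) ∧
      ‖EA‖ ≤ 1 ∧
      (∀ a : A, 0 ≤ a → 0 ≤ EA a) ∧
      (∀ a ∈ closure (↑(Submodule.span ℂ
          (⋃ x : V, (spec δ tmul U (Mor.id x) : Set A))) : Set A), EA a = a) ∧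
      (∀ g : Mor V, ¬ g.IsId → ∀ a ∈ spec δ tmul U g, EA a = 0) := by
  have hS := isGroupoidGrading_spec hUmul hUzero hUstar hTmul hTstar hinj
  have hP : ∀ g a, a ∈ spec δ tmul U g → idEG (δ a) = δ (if g.IsId then a else 0) :=
    fun _ _ => map_apply_eq_ite_of_mem_spec hEGid hEG0 hidEG
  obtain ⟨EA, hEA⟩ := δ.exists_comp_eq_of_dense_span hinj idEG hδdense fun a ha => by
    obtain ⟨g, hg⟩ := Set.mem_iUnion.mp ha
    exact ⟨_, (hP g a hg).symm⟩
  have hE : IsGradingExpectation (spec δ tmul U) EA :=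
    ⟨fun x a ha => hinj <| by rw [hEA, hP _ a ha, if_pos ⟨x, rfl⟩],
      fun g hg a ha => hinj <| by rw [hEA, hP g a ha, if_neg hg, map_zero]⟩
  have hSchwarz : IsSchwarzMap EA := hδdense.induction
    (fun a ha => hS.star_map_mul_map_le hE ha) (isClosed_le (by fun_prop) (by fun_prop))
  refine ⟨isClosed_spec fun a u => (hTnorm a u).le, hS.mul_mem, hS.mul_eq_zero, hS.star_mem,
    hS.eq_zero_of_sum_eq_zero hE, EA, hEA, hSchwarz.opNorm_le_one,
    fun a => hSchwarz.map_nonneg, fun a ha => ?_, hE.map_eq_zero⟩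
  have hspan : Submodule.span ℂ (⋃ x : V, (spec δ tmul U (Mor.id x) : Set A)) ≤
      LinearMap.eqLocus (EA : A →ₗ[ℂ] A) LinearMap.id :=
    Submodule.span_le.mpr (Set.iUnion_subset hE.map_eq_self)
  exact closure_minimal hspan (isClosed_eq EA.continuous continuous_id) ha
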